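/- arXiv:2509.26180 — 3 statements merged into one kernel-verified Lean document; each statement's English description precedes it below -/
import Mathlib

section
/- Let t ≥ 2 be an integer, δ > 0, and let G be a bipartite graph on at most n vertices with bipartition {X, Y} such that |X| ≥ 2t·(e/δ)^t and every vertex in X has at least δn neighbours in Y. Then G contains a copy of the complete bipartite graph K_{t,t} (with t vertices in X and t vertices in Y). -/
open Finset

/-- `d^t * t! ≤ t^t * d.descFactorial t` for `t ≤ d`. -/
lemma aux_desc (d t : ℕ) (htd : t ≤ d) :
    d ^ t * t.factorial ≤ t ^ t * d.descFactorial t := by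
  have hf : t.factorial = ∏ i ∈ Finset.range t, (t - i) := by
    rw [← Nat.descFactorial_self, Nat.descFactorial_eq_prod_range]
  calc d ^ t * t.factorial = ∏ i ∈ Finset.range t, (d * (t - i)) := by
        rw [Finset.prod_mul_distrib, Finset.prod_const, Finset.card_range, hf]
    _ ≤ ∏ i ∈ Finset.range t, (t * (d - i)) := by
        apply Finset.prod_le_prod'
        intro i hi
        have hi' : i ≤ t := (Finset.mem_range.mp hi).le
        have hi'' : i ≤ d := hi'.trans htd
        zify [hi', hi'']
        nlinarith [mul_le_mul_of_nonneg_right (show (t : ℤ) ≤ d by exact_mod_cast htd)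
          (show (0 : ℤ) ≤ i by positivity)]
    _ = t ^ t * d.descFactorial t := by
        rw [Finset.prod_mul_distrib, Finset.prod_const, Finset.card_range,
          Nat.descFactorial_eq_prod_range]

/-- `d^t ≤ t^t * C(d,t)` for `t ≤ d`, over the reals. -/
lemma aux_choose_lb (d t : ℕ) (htd : t ≤ d) :
    (d : ℝ) ^ t ≤ (t : ℝ) ^ t * (d.choose t : ℝ) := by
  have h := aux_desc d t htd
  rw [Nat.descFactorial_eq_factorial_mul_choose] at h
  have h' : (d : ℝ) ^ t * (t.factorial : ℝ) ≤
      (t : ℝ) ^ t * ((t.factorial : ℝ) * (d.choose t : ℝ)) := by exact_mod_cast h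
  have hf : (0 : ℝ) < (t.factorial : ℝ) := by exact_mod_cast t.factorial_pos
  nlinarith [h', hf]

/-- `t^t ≤ e^t * t!`. -/
lemma aux_fact (t : ℕ) : (t : ℝ) ^ t ≤ Real.exp 1 ^ t * (t.factorial : ℝ) := by
  have h := Real.pow_div_factorial_le_exp (x := (t : ℝ)) (by positivity) t
  rw [div_le_iff₀ (by exact_mod_cast t.factorial_pos : (0:ℝ) < (t.factorial : ℝ))] at h
  have he : Real.exp (t : ℝ) = Real.exp 1 ^ t := by
    rw [← Real.exp_nat_mul, mul_one]
  rw [he] at h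
  exact h

/-- **Unbalanced Kővári–Sós–Turán.** If `G` is a bipartite graph on at most `n` vertices
with parts `X`, `Y`, `|X| ≥ 2t (e/δ)^t`, and every vertex of `X` has at least `δn`
neighbours in `Y`, then `G` contains a `K_{t,t}` with `t` vertices in `X` and `t` in `Y`. -/
theorem unbalanced_kst {V : Type*} [Fintype V] [DecidableEq V]
    (G : SimpleGraph V) [DecidableRel G.Adj] (t n : ℕ) (ht : 2 ≤ t)
    (δ : ℝ) (hδ : 0 < δ) (X Y : Finset V) (hdisj : Disjoint X Y)
    (hbip : ∀ u v, G.Adj u v → (u ∈ X ∧ v ∈ Y) ∨ (u ∈ Y ∧ v ∈ X))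
    (hn : (X ∪ Y).card ≤ n)
    (hX : 2 * t * (Real.exp 1 / δ) ^ t ≤ (X.card : ℝ))
    (hdeg : ∀ x ∈ X, δ * n ≤ ((Y.filter (fun y => G.Adj x y)).card : ℝ)) :
    ∃ A ⊆ X, ∃ B ⊆ Y, A.card = t ∧ B.card = t ∧
      ∀ a ∈ A, ∀ b ∈ B, G.Adj a b := by
  classical
  set N : V → Finset V := fun x => Y.filter (fun y => G.Adj x y) with hN
  have ht0 : (0:ℝ) < t := by positivity
  have hE : (0:ℝ) < Real.exp 1 ^ t := by positivity
  have hEδ : (0:ℝ) < (Real.exp 1 / δ) ^ t := by positivity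
  have hXpos : (0:ℝ) < (X.card : ℝ) := lt_of_lt_of_le (by positivity) hX
  have hXne : X.Nonempty := Finset.card_pos.mp (by exact_mod_cast hXpos)
  have hXn : X.card ≤ n := (Finset.card_le_card Finset.subset_union_left).trans hn
  have hYn : Y.card ≤ n := (Finset.card_le_card Finset.subset_union_right).trans hn
  have hn1 : 1 ≤ n := le_trans (Finset.card_pos.mpr hXne) hXn
  have hδ1 : δ ≤ 1 := by
    obtain ⟨x, hx⟩ := hXne
    have h1 := hdeg x hx
    have h2 : ((N x).card : ℝ) ≤ (n : ℝ) := by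
      exact_mod_cast (Finset.card_le_card (Finset.filter_subset _ _)).trans hYn
    have hn0 : (0:ℝ) < n := by exact_mod_cast hn1
    nlinarith
  by_cases hcase : (t : ℝ) ≤ δ * n
  swap
  · -- degenerate case : δ n < t forces |X| > n, contradiction
    push_neg at hcase
    exfalso
    have h1 : (n : ℝ) < t / δ := by rw [lt_div_iff₀ hδ]; linarith
    have h2 : 1 / δ ≤ (Real.exp 1 / δ) ^ t := by
      have hexp : (1:ℝ) ≤ Real.exp 1 := Real.one_le_exp (by norm_num)
      have hb1 : (1:ℝ) ≤ Real.exp 1 / δ := by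
        rw [le_div_iff₀ hδ]
        linarith
      have hb : 1 / δ ≤ Real.exp 1 / δ := by gcongr
      calc 1 / δ ≤ Real.exp 1 / δ := hb
        _ ≤ (Real.exp 1 / δ) ^ t := le_self_pow₀ hb1 (by omega)
    have h3 : t / δ ≤ 2 * t * (Real.exp 1 / δ) ^ t := by
      have heq : (t:ℝ) / δ = t * (1/δ) := by ring
      rw [heq]
      nlinarith [h2, hδ, ht0]
    have h4 : (X.card : ℝ) ≤ (n : ℝ) := by exact_mod_cast hXn
    linarith
  · by_contra hcon
    push_neg at hcon
    -- every t-subset B of Y has at most t-1 common neighbours in X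
    have hB : ∀ B ∈ Y.powersetCard t,
        (X.filter (fun x => B ⊆ N x)).card ≤ t - 1 := by
      intro B hBmem
      obtain ⟨hBY, hBcard⟩ := Finset.mem_powersetCard.mp hBmem
      by_contra hle
      push_neg at hle
      have hle' : t ≤ (X.filter (fun x => B ⊆ N x)).card := by omega
      obtain ⟨A, hAsub, hAcard⟩ := Finset.exists_subset_card_eq hle'
      have hAX : A ⊆ X := hAsub.trans (Finset.filter_subset _ _)
      obtain ⟨a, ha, b, hb, hnadj⟩ := hcon A hAX B hBY hAcard hBcard
      have hmem := Finset.mem_filter.mp (hAsub ha)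
      exact hnadj ((Finset.mem_filter.mp (hmem.2 hb)).2)
    -- double counting
    have hpow : ∀ x ∈ X, (N x).powersetCard t =
        (Y.powersetCard t).filter (fun B => B ⊆ N x) := by
      intro x _
      ext B
      simp only [Finset.mem_powersetCard, Finset.mem_filter]
      constructor
      · rintro ⟨h1, h2⟩
        exact ⟨⟨h1.trans (Finset.filter_subset _ _), h2⟩, h1⟩
      · rintro ⟨⟨_, h2⟩, h3⟩
        exact ⟨h3, h2⟩
    have key : ∑ x ∈ X, (N x).card.choose t =
        ∑ B ∈ Y.powersetCard t, (X.filter (fun x => B ⊆ N x)).card := by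
      calc ∑ x ∈ X, (N x).card.choose t
          = ∑ x ∈ X, ((N x).powersetCard t).card := by
            simp [Finset.card_powersetCard]
        _ = ∑ x ∈ X, ((Y.powersetCard t).filter (fun B => B ⊆ N x)).card :=
            Finset.sum_congr rfl (fun x hx => by rw [hpow x hx])
        _ = ∑ B ∈ Y.powersetCard t, (X.filter (fun x => B ⊆ N x)).card := by
            simp_rw [Finset.card_filter]
            exact Finset.sum_comm
    -- upper bound in ℕ
    have hup : ∑ x ∈ X, (N x).card.choose t ≤ n.choose t * (t - 1) := by
      rw [key]
      calc ∑ B ∈ Y.powersetCard t, (X.filter (fun x => B ⊆ N x)).card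
          ≤ ∑ _B ∈ Y.powersetCard t, (t - 1) := Finset.sum_le_sum hB
        _ = (Y.powersetCard t).card * (t - 1) := by
            rw [Finset.sum_const, smul_eq_mul]
        _ = Y.card.choose t * (t - 1) := by rw [Finset.card_powersetCard]
        _ ≤ n.choose t * (t - 1) :=
            Nat.mul_le_mul_right _ (Nat.choose_le_choose t hYn)
    -- lower bound in ℝ
    set s : ℝ := ∑ x ∈ X, ((N x).card.choose t : ℝ) with hs
    have hlow : (X.card : ℝ) * (δ * n) ^ t ≤ (t : ℝ) ^ t * s := by
      have step : ∀ x ∈ X, (δ * n) ^ t ≤ (t : ℝ) ^ t * ((N x).card.choose t : ℝ) := by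
        intro x hx
        have h1 : (t : ℝ) ≤ ((N x).card : ℝ) := hcase.trans (hdeg x hx)
        have htd : t ≤ (N x).card := by exact_mod_cast h1
        calc (δ * n) ^ t ≤ ((N x).card : ℝ) ^ t := by
              apply pow_le_pow_left₀ (by positivity) (hdeg x hx)
          _ ≤ (t : ℝ) ^ t * ((N x).card.choose t : ℝ) := aux_choose_lb _ _ htd
      calc (X.card : ℝ) * (δ * n) ^ t = ∑ _x ∈ X, (δ * n) ^ t := by
            rw [Finset.sum_const, nsmul_eq_mul]
        _ ≤ ∑ x ∈ X, (t : ℝ) ^ t * ((N x).card.choose t : ℝ) := Finset.sum_le_sum step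
        _ = (t : ℝ) ^ t * s := by rw [hs, Finset.mul_sum]
    have hsup : s ≤ (n.choose t : ℝ) * ((t : ℝ) - 1) := by
      have h1 : s = ((∑ x ∈ X, (N x).card.choose t : ℕ) : ℝ) := by
        rw [hs]; push_cast; ring
      have h2 : ((∑ x ∈ X, (N x).card.choose t : ℕ) : ℝ) ≤ ((n.choose t * (t-1) : ℕ) : ℝ) := by
        exact_mod_cast hup
      have h3 : ((n.choose t * (t-1) : ℕ) : ℝ) ≤ (n.choose t : ℝ) * ((t : ℝ) - 1) := by
        push_cast
        have hc : ((t - 1 : ℕ) : ℝ) ≤ (t : ℝ) - 1 := by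
          rw [Nat.cast_sub (show 1 ≤ t by omega)]; norm_num
        nlinarith [(by positivity : (0:ℝ) ≤ ((n.choose t : ℕ) : ℝ))]
      rw [h1]
      linarith
    -- numeric facts
    have hfac : (0:ℝ) < (t.factorial : ℝ) := by exact_mod_cast t.factorial_pos
    have hchoose : (t.factorial : ℝ) * (n.choose t : ℝ) ≤ (n : ℝ) ^ t := by
      have h : t.factorial * n.choose t ≤ n ^ t :=
        Nat.descFactorial_eq_factorial_mul_choose n t ▸ Nat.descFactorial_le_pow n t
      exact_mod_cast h
    have hTf := aux_fact t
    have hb : (0:ℝ) < (n : ℝ) ^ t := by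
      have hn0 : (0:ℝ) < (n:ℝ) := by exact_mod_cast hn1
      positivity
    have ha : (0:ℝ) < δ ^ t := by positivity
    have hs0 : (0:ℝ) ≤ s := by
      rw [hs]; exact Finset.sum_nonneg fun _ _ => by positivity
    have ht1 : (0:ℝ) ≤ (t:ℝ) - 1 := by
      have h2t : (2:ℝ) ≤ t := by exact_mod_cast ht
      linarith
    -- assemble the chain
    have hchain : (X.card : ℝ) * δ ^ t * ((n:ℝ) ^ t * (t.factorial : ℝ)) ≤
        Real.exp 1 ^ t * ((t:ℝ) - 1) * ((n:ℝ) ^ t * (t.factorial : ℝ)) := by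
      have hmp : (δ * n) ^ t = δ ^ t * (n:ℝ) ^ t := mul_pow _ _ _
      calc (X.card : ℝ) * δ ^ t * ((n:ℝ) ^ t * (t.factorial : ℝ))
          = ((X.card : ℝ) * (δ * n) ^ t) * (t.factorial : ℝ) := by rw [hmp]; ring
        _ ≤ ((t:ℝ) ^ t * s) * (t.factorial : ℝ) :=
            mul_le_mul_of_nonneg_right hlow hfac.le
        _ = (t:ℝ) ^ t * (t.factorial : ℝ) * s := by ring
        _ ≤ (t:ℝ) ^ t * (t.factorial : ℝ) * ((n.choose t : ℝ) * ((t:ℝ) - 1)) := by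
            apply mul_le_mul_of_nonneg_left hsup (by positivity)
        _ = ((t.factorial : ℝ) * (n.choose t : ℝ)) * ((t:ℝ) ^ t * ((t:ℝ) - 1)) := by ring
        _ ≤ (n:ℝ) ^ t * ((Real.exp 1 ^ t * (t.factorial : ℝ)) * ((t:ℝ) - 1)) :=
            mul_le_mul hchoose
              (mul_le_mul_of_nonneg_right hTf ht1)
              (by positivity) hb.le
        _ = Real.exp 1 ^ t * ((t:ℝ) - 1) * ((n:ℝ) ^ t * (t.factorial : ℝ)) := by ring
    have hmain : (X.card : ℝ) * δ ^ t ≤ Real.exp 1 ^ t * ((t:ℝ) - 1) :=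
      le_of_mul_le_mul_right hchain (by positivity)
    -- contradiction with hX
    have hXδ : 2 * (t:ℝ) * Real.exp 1 ^ t ≤ (X.card : ℝ) * δ ^ t := by
      have h1 : (Real.exp 1 / δ) ^ t = Real.exp 1 ^ t / δ ^ t := div_pow _ _ _
      rw [h1] at hX
      have h2 : 2 * (t:ℝ) * (Real.exp 1 ^ t / δ ^ t) * δ ^ t ≤ (X.card : ℝ) * δ ^ t :=
        mul_le_mul_of_nonneg_right hX ha.le
      calc 2 * (t:ℝ) * Real.exp 1 ^ t
          = 2 * (t:ℝ) * (Real.exp 1 ^ t / δ ^ t) * δ ^ t := by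
            field_simp
        _ ≤ (X.card : ℝ) * δ ^ t := h2
    have ht2 : (2:ℝ) ≤ (t:ℝ) := by exact_mod_cast ht
    nlinarith [hE, hmain, hXδ, ht2]
end

section
/- If a finite graph G admits a perfect fractional matching, then G admits a perfect 2-matching, i.e., a collection of pairwise vertex-disjoint edges and odd cycles covering all vertices of G. -/
/-!
A perfect fractional matching `w` makes `(w s(u, v))` a symmetric doubly stochastic matrix, so by
the Birkhoff–von Neumann theorem some permutation `σ` has `w s(v, σ v) > 0` for every `v`: `σ`
moves every vertex to a neighbour. Its cycles of length 2 and its odd cycles are already edges and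
odd cycles of `G`, and every even cycle can be traded for a perfect matching of its own edges. The
graph of the resulting permutation is a perfect 2-matching.
-/

open Finset Equiv Equiv.Perm

namespace Equiv.Perm
variable {α : Type*} {σ τ : Perm α} {u v : α}

theorem sameCycle_sq_or_sameCycle_sq_apply (h : σ.SameCycle u v) :
    (σ ^ 2).SameCycle u (σ v) ∨ (σ ^ 2).SameCycle u v := by
  obtain ⟨k, rfl⟩ := h
  obtain ⟨j, rfl | rfl⟩ := Int.even_or_odd' k
  · exact .inr ⟨j, by rw [← zpow_natCast, ← zpow_mul]; ring_nf⟩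
  · refine .inl ⟨j + 1, ?_⟩
    rw [← zpow_natCast, ← zpow_mul, ← mul_apply, ← zpow_one_add]
    ring_nf

variable (σ) in
noncomputable def cycleBase (v : α) : α := (Quotient.mk (SameCycle.setoid σ) v).out

theorem sameCycle_cycleBase (v : α) : σ.SameCycle (σ.cycleBase v) v :=
  Quotient.mk_out (s := SameCycle.setoid σ) v

theorem SameCycle.cycleBase_eq (h : σ.SameCycle u v) : σ.cycleBase u = σ.cycleBase v :=
  congrArg Quotient.out (Quotient.sound h)

variable [Fintype α] [DecidableEq α]

theorem card_support_cycleOf_eq_two (hv : σ v ≠ v) (h : σ (σ v) = v) :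
    #(σ.cycleOf v).support = 2 := by
  have hdvd : #(σ.cycleOf v).support ∣ 2 :=
    ((σ.isCycleOn_support_cycleOf v).pow_apply_eq (mem_support_cycleOf_iff' hv |>.2 .rfl)).1 h
  exact le_antisymm (Nat.le_of_dvd two_pos hdvd) (two_le_card_support_cycleOf_iff.2 hv)

theorem cycleOf_congr (h : ∀ u, σ.SameCycle v u → τ u = σ u) :
    τ.cycleOf v = σ.cycleOf v := by
  have hpow (n : ℕ) : (τ ^ n) v = (σ ^ n) v := by
    induction n with
    | zero => rfl
    | succ n ih =>
      rw [pow_succ', mul_apply, ih, h _ (sameCycle_pow_right.2 .rfl), ← mul_apply, ← pow_succ']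
  have hsame (u : α) : τ.SameCycle v u ↔ σ.SameCycle v u := by
    constructor <;> intro hu <;> obtain ⟨n, rfl⟩ := hu.exists_nat_pow_eq
    · exact hpow n ▸ sameCycle_pow_right.2 .rfl
    · exact (hpow n).symm ▸ sameCycle_pow_right.2 .rfl
  ext u
  simp only [cycleOf_apply, hsame]
  split_ifs with hu
  · exact h u hu
  · rfl

theorem not_sameCycle_sq_apply (hv : σ v ≠ v) (h : Even #(σ.cycleOf v).support) :
    ¬ (σ ^ 2).SameCycle v (σ v) := by
  rintro ⟨k, hk⟩
  have hperiod : (σ ^ (2 * k - 1)) v = v := by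
    have hpow : σ ^ (2 * k - 1) = σ⁻¹ * (σ ^ 2) ^ k := by
      rw [← zpow_natCast, ← zpow_mul, ← zpow_neg_one, ← zpow_add]
      ring_nf
    simp [hpow, hk]
  obtain ⟨q, hq⟩ := ((σ.isCycleOn_support_cycleOf v).zpow_apply_eq
    (mem_support_cycleOf_iff' hv |>.2 .rfl)).1 hperiod
  obtain ⟨r, hr⟩ := hq ▸ ((Int.even_coe_nat _).2 h).mul_right q
  omega

/- An even cycle of `σ` is the union of two cycles of `σ ^ 2`, which alternate along it. Letting
the points of one of them step forward and the others backward replaces the cycle by a perfect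
matching of its edges. -/
open scoped Classical in
variable (σ) in
noncomputable def splitEvenCycles (v : α) : α :=
  if Even #(σ.cycleOf v).support ∧ ¬ (σ ^ 2).SameCycle (σ.cycleBase v) v then σ⁻¹ v
  else σ v

theorem splitEvenCycles_eq_or (v : α) :
    σ.splitEvenCycles v = σ v ∨ σ (σ.splitEvenCycles v) = v := by
  unfold splitEvenCycles
  split_ifs
  · exact .inr (σ.apply_symm_apply v)
  · exact .inl rfl

theorem sameCycle_splitEvenCycles (v : α) : σ.SameCycle v (σ.splitEvenCycles v) := by
  rcases splitEvenCycles_eq_or (σ := σ) v with h | h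
  · exact h ▸ sameCycle_apply_right.2 .rfl
  · have hback : σ.SameCycle (σ (σ.splitEvenCycles v)) (σ.splitEvenCycles v) :=
      sameCycle_apply_left.2 .rfl
    rwa [h] at hback

theorem splitEvenCycles_of_odd (h : Odd #(σ.cycleOf v).support) : σ.splitEvenCycles v = σ v := by
  simp [splitEvenCycles, Nat.not_even_iff_odd.2 h]

theorem splitEvenCycles_splitEvenCycles_of_even (hσ : ∀ v, σ v ≠ v)
    (h : Even #(σ.cycleOf v).support) : σ.splitEvenCycles (σ.splitEvenCycles v) = v := by
  have hbase : σ.SameCycle (σ.cycleBase v) v := sameCycle_cycleBase v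
  by_cases hP : (σ ^ 2).SameCycle (σ.cycleBase v) v
  · have hsv : σ.SameCycle v (σ v) := sameCycle_apply_right.2 .rfl
    have hPσ : ¬ (σ ^ 2).SameCycle (σ.cycleBase (σ v)) (σ v) := by
      rw [← hsv.cycleBase_eq]
      exact fun h' => not_sameCycle_sq_apply (hσ v) h (hP.symm.trans h')
    have hstep : σ.splitEvenCycles v = σ v := if_neg fun h' => h'.2 hP
    rw [hstep, splitEvenCycles, if_pos ⟨hsv.cycleOf_eq ▸ h, hPσ⟩]
    exact σ.symm_apply_apply v
  · have hsv : σ.SameCycle v (σ⁻¹ v) := sameCycle_symm_apply_right.2 .rfl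
    have hPσ : (σ ^ 2).SameCycle (σ.cycleBase (σ⁻¹ v)) (σ⁻¹ v) := by
      rw [← hsv.cycleBase_eq]
      simpa [hP] using sameCycle_sq_or_sameCycle_sq_apply (hbase.trans hsv)
    have hstep : σ.splitEvenCycles v = σ⁻¹ v := if_pos ⟨h, hP⟩
    rw [hstep, splitEvenCycles, if_neg fun h' => h'.2 hPσ]
    exact σ.apply_symm_apply v

theorem splitEvenCycles_injective (hσ : ∀ v, σ v ≠ v) :
    Function.Injective σ.splitEvenCycles := by
  intro u w huw
  have hcyc : σ.cycleOf u = σ.cycleOf w := by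
    refine ((sameCycle_splitEvenCycles u).trans ?_).cycleOf_eq
    exact huw ▸ (sameCycle_splitEvenCycles w).symm
  rcases Nat.even_or_odd #(σ.cycleOf u).support with hu | hu
  · have hw : Even #(σ.cycleOf w).support := hcyc ▸ hu
    rw [← splitEvenCycles_splitEvenCycles_of_even hσ hu, huw,
      splitEvenCycles_splitEvenCycles_of_even hσ hw]
  · have hw : Odd #(σ.cycleOf w).support := hcyc ▸ hu
    rwa [splitEvenCycles_of_odd hu, splitEvenCycles_of_odd hw, σ.apply_eq_iff_eq] at huw

theorem exists_perm_card_support_cycleOf_eq_two_or_odd (hσ : ∀ v, σ v ≠ v) :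
    ∃ τ : Perm α, (∀ v, τ v ≠ v) ∧ (∀ v, τ v = σ v ∨ σ (τ v) = v) ∧
      ∀ v, #(τ.cycleOf v).support = 2 ∨ Odd #(τ.cycleOf v).support := by
  let τ : Perm α :=
    ofBijective _ (Finite.injective_iff_bijective.1 (splitEvenCycles_injective hσ))
  have hτ (v : α) : τ v = σ.splitEvenCycles v := rfl
  have hτv (v : α) : τ v ≠ v := by
    rcases splitEvenCycles_eq_or (σ := σ) v with h | h <;> rw [hτ]
    · exact h ▸ hσ v
    · exact fun h' => hσ v (by rwa [h'] at h)
  refine ⟨τ, hτv, splitEvenCycles_eq_or, fun v => ?_⟩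
  rcases Nat.even_or_odd #(σ.cycleOf v).support with h | h
  · exact .inl <| card_support_cycleOf_eq_two (hτv v)
      (splitEvenCycles_splitEvenCycles_of_even hσ h)
  · have hcyc : τ.cycleOf v = σ.cycleOf v :=
      cycleOf_congr fun u hu => splitEvenCycles_of_odd (hu.cycleOf_eq ▸ h)
    exact .inr (hcyc ▸ h)

end Equiv.Perm

theorem Matrix.exists_perm_forall_pos_of_mem_doublyStochastic {R n : Type*} [Fintype n]
    [DecidableEq n] [Field R] [LinearOrder R] [IsStrictOrderedRing R] {M : Matrix n n R}
    (hM : M ∈ doublyStochastic R n) : ∃ σ : Perm n, ∀ i, 0 < M i (σ i) := by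
  obtain ⟨c, hc0, hc1, hcM⟩ := exists_eq_sum_perm_of_mem_doublyStochastic hM
  obtain ⟨σ, -, hσ⟩ := exists_lt_of_sum_lt (s := univ) (f := 0) (g := c) (by simp [hc1])
  refine ⟨σ, fun i => ?_⟩
  calc (0 : R) < c σ * σ.permMatrix R i (σ i) := by simpa [Equiv.toPEquiv_apply] using hσ
    _ ≤ ∑ τ, c τ * τ.permMatrix R i (σ i) :=
        single_le_sum (f := fun τ => c τ * τ.permMatrix R i (σ i))
          (fun τ _ => mul_nonneg (hc0 τ)
            (nonneg_of_mem_doublyStochastic permMatrix_mem_doublyStochastic))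
          (mem_univ σ)
    _ = M i (σ i) := by rw [← hcM]; simp [Matrix.sum_apply]

namespace SimpleGraph

variable {V : Type*}

section Fractional

variable [Fintype V] [DecidableEq V] (G : SimpleGraph V) [DecidableRel G.Adj]

theorem sum_edgeFinset_ite_mem {M : Type*} [AddCommMonoid M] {w : Sym2 V → M}
    (hw : ∀ e ∉ G.edgeSet, w e = 0) (v : V) :
    ∑ e ∈ G.edgeFinset, (if v ∈ e then w e else 0) = ∑ u, w s(v, u) := by
  have himage : ({e | v ∈ e} : Finset (Sym2 V)) = univ.image (s(v, ·)) := by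
    ext e
    simp [Sym2.mem_iff_exists, eq_comm]
  rw [sum_subset (subset_univ _) fun e _ he => by simp [hw e (by simpa using he)], ← sum_filter,
    himage, sum_image fun _ _ _ _ h => Sym2.congr_right.1 h]

theorem exists_perm_forall_adj_of_fractional_perfect_matching {w : Sym2 V → ℝ}
    (hw0 : ∀ e, 0 ≤ w e)
    (hwG : ∀ e ∉ G.edgeSet, w e = 0)
    (hw1 : ∀ v, ∑ e ∈ G.edgeFinset, (if v ∈ e then w e else 0) = 1) :
    ∃ σ : Perm V, ∀ v, G.Adj v (σ v) := by
  have hrow (v : V) : ∑ u, w s(v, u) = 1 := by rw [← sum_edgeFinset_ite_mem G hwG, hw1]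
  have hM : Matrix.of (fun u v => w s(u, v)) ∈ doublyStochastic ℝ V := by
    refine mem_doublyStochastic_iff_sum.2 ⟨fun _ _ => hw0 _, hrow, fun v => ?_⟩
    simpa only [Matrix.of_apply, Sym2.eq_swap] using hrow v
  obtain ⟨σ, hσ⟩ := Matrix.exists_perm_forall_pos_of_mem_doublyStochastic hM
  refine ⟨σ, fun v => ?_⟩
  by_contra hadj
  exact (hσ v).ne' (hwG _ hadj)
end Fractional

def fromPerm (σ : Perm V) : SimpleGraph V := fromRel fun u v => σ u = v

def IsPerfectTwoMatching (H : SimpleGraph V) : Prop :=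
  (∀ v, 1 ≤ (H.neighborSet v).ncard ∧ (H.neighborSet v).ncard ≤ 2) ∧
    ∀ c : H.ConnectedComponent, c.supp.ncard = 2 ∨
      (Odd c.supp.ncard ∧ ∀ v ∈ c.supp, (H.neighborSet v).ncard = 2)

variable {σ : Perm V} {u v : V}

theorem fromPerm_adj : (fromPerm σ).Adj u v ↔ u ≠ v ∧ (σ u = v ∨ σ v = u) :=
  fromRel_adj _ _ _

theorem fromPerm_le {G : SimpleGraph V} (h : ∀ v, G.Adj v (σ v)) : fromPerm σ ≤ G := by
  rintro u v ⟨-, rfl | rfl⟩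
  exacts [h u, (h v).symm]

theorem neighborSet_fromPerm (hv : σ v ≠ v) :
    (fromPerm σ).neighborSet v = {σ v, σ⁻¹ v} := by
  ext u
  simp only [mem_neighborSet, fromPerm_adj, Set.mem_insert_iff, Set.mem_singleton_iff,
    Perm.eq_inv_iff_eq]
  constructor
  · rintro ⟨-, h | h⟩
    exacts [.inl h.symm, .inr h]
  · rintro (rfl | rfl)
    exacts [⟨hv.symm, .inl rfl⟩, ⟨fun h => hv (by simp [h]), .inr rfl⟩]

theorem reachable_fromPerm_apply (v : V) : (fromPerm σ).Reachable v (σ v) := by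
  by_cases hv : σ v = v
  · rw [hv]
  · exact (fromPerm_adj.2 ⟨Ne.symm hv, .inl rfl⟩).reachable

theorem reachable_fromPerm_iff [Finite V] : (fromPerm σ).Reachable u v ↔ σ.SameCycle u v := by
  constructor
  · rintro ⟨p⟩
    induction p with
    | nil => exact .rfl
    | cons h _ ih =>
      rcases (fromPerm_adj.1 h).2 with rfl | rfl
      exacts [sameCycle_apply_left.1 ih, sameCycle_apply_left.2 ih]
  · intro h
    obtain ⟨n, rfl⟩ := h.exists_nat_pow_eq
    clear h
    induction n with
    | zero => rfl
    | succ n ih => exact ih.trans (pow_succ' σ n ▸ reachable_fromPerm_apply _)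

section Finite

variable [Fintype V] [DecidableEq V]

theorem supp_connectedComponentMk_fromPerm (hv : σ v ≠ v) :
    ((fromPerm σ).connectedComponentMk v).supp = (σ.cycleOf v).support := by
  ext u
  simp [ConnectedComponent.mem_supp_iff, ConnectedComponent.eq, reachable_fromPerm_iff,
    mem_support_cycleOf_iff' hv, sameCycle_comm]

theorem isPerfectTwoMatching_fromPerm (hσ : ∀ v, σ v ≠ v)
    (hcyc : ∀ v, #(σ.cycleOf v).support = 2 ∨ Odd #(σ.cycleOf v).support) :
    (fromPerm σ).IsPerfectTwoMatching := by
  refine ⟨fun v => ?_, fun c => c.ind fun v => ?_⟩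
  · rw [neighborSet_fromPerm (hσ v)]
    by_cases h : σ v = σ⁻¹ v
    · simp [h]
    · rw [Set.ncard_pair h]; simp
  · rw [supp_connectedComponentMk_fromPerm (hσ v), Set.ncard_coe_finset]
    refine (hcyc v).imp id fun hodd => ⟨hodd, fun u hu => ?_⟩
    have hcycle : σ.cycleOf v = σ.cycleOf u :=
      ((mem_support_cycleOf_iff' (hσ v)).1 (mem_coe.1 hu)).cycleOf_eq
    rw [neighborSet_fromPerm (hσ u), Set.ncard_pair]
    intro h
    have htwo := card_support_cycleOf_eq_two (hσ u) (by rw [h]; exact σ.apply_symm_apply u)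
    rw [hcycle, htwo] at hodd
    exact Nat.not_odd_iff_even.2 even_two hodd

end Finite

end SimpleGraph

open SimpleGraph

/-- **Perfect fractional matching implies perfect 2-matching.** If a finite graph `G`
admits a perfect fractional matching, then there is a spanning subgraph `H ≤ G` all of
whose vertices have degree 1 or 2 and each of whose connected components is either a
single edge (2 vertices) or an odd cycle (odd number of vertices, all of degree 2). -/
theorem perfect_fractional_matching_implies_perfect_two_matching
    {V : Type*} [Fintype V] [DecidableEq V] (G : SimpleGraph V) [DecidableRel G.Adj]
    (w : Sym2 V → ℝ)
    (hw01 : ∀ e, 0 ≤ w e ∧ w e ≤ 1)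
    (hwsupp : ∀ e, e ∉ G.edgeSet → w e = 0)
    (hperf : ∀ v, ∑ e ∈ G.edgeFinset, (if v ∈ e then w e else 0) = 1) :
    ∃ H : SimpleGraph V, H ≤ G ∧
      (∀ v, 1 ≤ (H.neighborSet v).ncard ∧ (H.neighborSet v).ncard ≤ 2) ∧
      ∀ c : H.ConnectedComponent, c.supp.ncard = 2 ∨
        (Odd c.supp.ncard ∧ ∀ v ∈ c.supp, (H.neighborSet v).ncard = 2) := by
  obtain ⟨σ, hσ⟩ :=
    G.exists_perm_forall_adj_of_fractional_perfect_matching (fun e => (hw01 e).1) hwsupp hperf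
  obtain ⟨τ, hτ, hτσ, hcyc⟩ :=
    σ.exists_perm_card_support_cycleOf_eq_two_or_odd fun v => (hσ v).ne'
  refine ⟨fromPerm τ, fromPerm_le fun v => ?_, isPerfectTwoMatching_fromPerm hτ hcyc⟩
  rcases hτσ v with h | h
  · exact h ▸ hσ v
  · simpa only [h] using (hσ (τ v)).symm
end

section
/- Let H be a graph, and let w : E(H) → [0,1] be a perfect fractional matching of H minimising the number of edges whose weight lies strictly between 0 and 1. Let H' be the spanning subgraph of H consisting of edges of positive weight. Then H' has no even cycle. -/
open Finset

/-- `w` is a perfect fractional matching of `H`: weights in `[0,1]`, supported on edges,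
with weighted degree exactly `1` at every vertex. -/
def IsPerfectFractionalMatching {V : Type*} [Fintype V] [DecidableEq V]
    (H : SimpleGraph V) [DecidableRel H.Adj] (w : Sym2 V → ℝ) : Prop :=
  (∀ e, 0 ≤ w e ∧ w e ≤ 1) ∧ (∀ e, e ∉ H.edgeSet → w e = 0) ∧
    ∀ v, ∑ e ∈ H.edgeFinset, (if v ∈ e then w e else 0) = 1

/-- The spanning subgraph of `H` consisting of the edges of positive weight. -/
def posSubgraph {V : Type*} (H : SimpleGraph V) (w : Sym2 V → ℝ) : SimpleGraph V where
  Adj u v := H.Adj u v ∧ 0 < w s(u, v)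
  symm := ⟨fun u v h => ⟨h.1.symm, by rw [Sym2.eq_swap]; exact h.2⟩⟩
  loopless := ⟨fun v h => H.irrefl h.1⟩

lemma walk_edges_getElem {V : Type*} {G : SimpleGraph V} {u v : V} (p : G.Walk u v) :
    ∀ (i : ℕ) (h : i < p.edges.length),
      p.edges[i] = s(p.getVert i, p.getVert (i+1)) := by
  induction p with
  | nil => simp
  | cons h q ih =>
    intro i hi
    cases i with
    | zero =>
      simp [SimpleGraph.Walk.edges_cons, SimpleGraph.Walk.getVert]
    | succ n =>
      simp only [SimpleGraph.Walk.edges_cons, SimpleGraph.Walk.getVert_cons_succ]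
      simp only [SimpleGraph.Walk.edges_cons, List.length_cons] at hi
      simpa using ih n (by omega)

lemma mem_posSubgraph_edgeSet {V : Type*} {H : SimpleGraph V} {w : Sym2 V → ℝ} {e : Sym2 V}
    (he : e ∈ (posSubgraph H w).edgeSet) : e ∈ H.edgeSet ∧ 0 < w e := by
  induction e using Sym2.ind with
  | _ a b => exact ⟨he.1, he.2⟩

/-- Two distinct incident edges, the second of positive weight, force weight `< 1`. -/
lemma pfm_lt_one {V : Type*} [Fintype V] [DecidableEq V]
    {H : SimpleGraph V} [DecidableRel H.Adj] {w : Sym2 V → ℝ}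
    (hw : IsPerfectFractionalMatching H w) {e₁ e₂ : Sym2 V} {u : V}
    (h1 : e₁ ∈ H.edgeSet) (h2 : e₂ ∈ H.edgeSet) (hne : e₁ ≠ e₂)
    (hu1 : u ∈ e₁) (hu2 : u ∈ e₂) (hpos : 0 < w e₂) : w e₁ < 1 := by
  have hsub : ({e₁, e₂} : Finset (Sym2 V)) ⊆ H.edgeFinset := by
    intro e he
    simp only [Finset.mem_insert, Finset.mem_singleton] at he
    rcases he with rfl | rfl <;> simpa [SimpleGraph.mem_edgeFinset]
  have hstep : ∑ e ∈ ({e₁, e₂} : Finset (Sym2 V)), (if u ∈ e then w e else 0)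
      ≤ ∑ e ∈ H.edgeFinset, (if u ∈ e then w e else 0) := by
    apply Finset.sum_le_sum_of_subset_of_nonneg hsub
    intro e _ _
    split
    · exact (hw.1 e).1
    · exact le_refl 0
  rw [Finset.sum_pair hne, if_pos hu1, if_pos hu2, hw.2.2 u] at hstep
  linarith

/-- **Minimal perfect fractional matchings have no even cycle of positive-weight edges.**
If `w` is a perfect fractional matching of `H` minimising the number of edges of weight
strictly between `0` and `1`, then the subgraph of positive-weight edges contains no even
cycle. -/
theorem no_even_cycle_of_minimal_pfm {V : Type*} [Fintype V] [DecidableEq V]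
    (H : SimpleGraph V) [DecidableRel H.Adj] (w : Sym2 V → ℝ)
    (hw : IsPerfectFractionalMatching H w)
    (hmin : ∀ w' : Sym2 V → ℝ, IsPerfectFractionalMatching H w' →
      {e ∈ H.edgeSet | 0 < w e ∧ w e < 1}.ncard ≤
        {e ∈ H.edgeSet | 0 < w' e ∧ w' e < 1}.ncard) :
    ∀ (v : V) (c : (posSubgraph H w).Walk v v), c.IsCycle → ¬ Even c.length := by
  intro v c hc hev
  have h3 : 3 ≤ c.length := hc.three_le_length
  have hnodup : c.edges.Nodup := hc.edges_nodup
  have hlenE : c.edges.length = c.length := c.length_edges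
  -- the i-th edge of the cycle, as a total function
  set ed : ℕ → Sym2 V := fun i => s(c.getVert i, c.getVert (i+1)) with hed
  have hedE : ∀ (i : ℕ) (h : i < c.length), c.edges[i]'(by omega) = ed i := by
    intro i h
    exact walk_edges_getElem c i (by omega)
  have hmemE : ∀ i, i < c.length → ed i ∈ c.edges := by
    intro i h
    rw [← hedE i h]
    exact List.getElem_mem _
  have hidx : ∀ i, i < c.length → c.edges.idxOf (ed i) = i := by
    intro i h
    rw [← hedE i h]
    exact List.Nodup.idxOf_getElem hnodup i (by omega)
  have hidx_lt : ∀ e ∈ c.edges, c.edges.idxOf e < c.length := by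
    intro e he
    rw [← hlenE]
    exact List.idxOf_lt_length_iff.mpr he
  have hidx_ed : ∀ e ∈ c.edges, ed (c.edges.idxOf e) = e := by
    intro e he
    rw [← hedE _ (hidx_lt e he)]
    exact List.getElem_idxOf (by have := hidx_lt e he; omega)
  -- basic facts about cycle edges
  have hEH : ∀ e ∈ c.edges, e ∈ H.edgeSet ∧ 0 < w e := by
    intro e he
    exact mem_posSubgraph_edgeSet (c.edges_subset_edgeSet he)
  have hne_idx : ∀ i, i < c.length → (i+1) % c.length ≠ i := by
    intro i h
    rcases Nat.lt_or_ge (i+1) c.length with h' | h'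
    · rw [Nat.mod_eq_of_lt h']; omega
    · have heq : i+1 = c.length := by omega
      rw [heq, Nat.mod_self]; omega
  have hne_ed : ∀ i, i < c.length → ed i ≠ ed ((i+1) % c.length) := by
    intro i h hcontra
    have h1 : (i+1) % c.length < c.length := Nat.mod_lt _ (by omega)
    have hkey := hidx i h
    rw [hcontra, hidx _ h1] at hkey
    exact hne_idx i h hkey
  have hshared : ∀ i, i < c.length →
      c.getVert ((i+1) % c.length) ∈ ed i ∧ c.getVert ((i+1) % c.length) ∈ ed ((i+1) % c.length) := by
    intro i h
    constructor
    · rcases Nat.lt_or_ge (i+1) c.length with h' | h'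
      · rw [Nat.mod_eq_of_lt h']
        simp [hed]
      · have heq : i + 1 = c.length := by omega
        rw [heq, Nat.mod_self]
        have hgv : c.getVert 0 = c.getVert (i+1) := by
          rw [SimpleGraph.Walk.getVert_zero, heq, SimpleGraph.Walk.getVert_length]
        rw [hgv]
        simp [hed]
    · simp [hed]
  have hlt1 : ∀ i, i < c.length → w (ed i) < 1 := by
    intro i h
    have h1 : (i+1) % c.length < c.length := Nat.mod_lt _ (by omega)
    obtain ⟨hu1, hu2⟩ := hshared i h
    exact pfm_lt_one hw (hEH _ (hmemE i h)).1 (hEH _ (hmemE _ h1)).1 (hne_ed i h)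
      hu1 hu2 (hEH _ (hmemE _ h1)).2
  have hpos : ∀ i, i < c.length → 0 < w (ed i) := fun i h => (hEH _ (hmemE i h)).2
  -- the alternating sign function
  set f : Sym2 V → ℝ := fun e => if e ∈ c.edges then (-1 : ℝ)^(c.edges.idxOf e) else 0 with hf
  have hf_ed : ∀ i, i < c.length → f (ed i) = (-1 : ℝ)^i := by
    intro i h
    simp only [hf, if_pos (hmemE i h), hidx i h]
  have hf_not : ∀ e, e ∉ c.edges → f e = 0 := by
    intro e he; simp [hf, he]
  -- the perturbation size
  have hrange : (Finset.range c.length).Nonempty := Finset.nonempty_range_iff.mpr (by omega)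
  set δ : ℕ → ℝ := fun i => if Even i then 1 - w (ed i) else w (ed i) with hδ
  have hδ_even : ∀ i, Even i → δ i = 1 - w (ed i) := by intro i h; simp [hδ, h]
  have hδ_odd : ∀ i, ¬ Even i → δ i = w (ed i) := by intro i h; simp [hδ, h]
  set x : ℝ := (Finset.range c.length).inf' hrange δ with hx
  have hx_le : ∀ i, i < c.length → x ≤ δ i := by
    intro i h
    exact Finset.inf'_le δ (Finset.mem_range.mpr h)
  have hx_pos : 0 < x := by
    rw [hx, Finset.lt_inf'_iff]
    intro i hi
    rw [Finset.mem_range] at hi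
    by_cases hpar : Even i
    · rw [hδ_even i hpar]; linarith [hlt1 i hi]
    · rw [hδ_odd i hpar]; exact hpos i hi
  -- vertex sums of the sign function vanish
  have hfsum : ∀ u : V, ∑ e ∈ H.edgeFinset, (if u ∈ e then f e else 0) = 0 := by
    intro u
    have hsub : c.edges.toFinset ⊆ H.edgeFinset := by
      intro e he
      rw [List.mem_toFinset] at he
      exact SimpleGraph.mem_edgeFinset.mpr (hEH e he).1
    rw [← Finset.sum_subset hsub (by
      intro e _ he
      rw [List.mem_toFinset] at he
      simp [hf_not e he])]
    have hbij : ∑ e ∈ c.edges.toFinset, (if u ∈ e then f e else 0)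
        = ∑ i ∈ Finset.range c.length, (if u ∈ ed i then f (ed i) else 0) := by
      apply Finset.sum_nbij' (i := fun e => c.edges.idxOf e) (j := fun i => ed i)
      · intro e he
        rw [List.mem_toFinset] at he
        exact Finset.mem_range.mpr (hidx_lt e he)
      · intro i hi
        rw [Finset.mem_range] at hi
        exact List.mem_toFinset.mpr (hmemE i hi)
      · intro e he
        rw [List.mem_toFinset] at he
        exact hidx_ed e he
      · intro i hi
        rw [Finset.mem_range] at hi
        exact hidx i hi
      · intro e he
        rw [List.mem_toFinset] at he
        rw [hidx_ed e he]
    rw [hbij]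
    -- telescoping
    set A : ℕ → ℝ := fun i => (if u = c.getVert i then 1 else 0) * (-1)^i with hA
    have hterm : ∀ i ∈ Finset.range c.length,
        (if u ∈ ed i then f (ed i) else 0) = A i - A (i+1) := by
      intro i hi
      rw [Finset.mem_range] at hi
      have hne : c.getVert i ≠ c.getVert (i+1) := (c.adj_getVert_succ hi).ne
      rw [hf_ed i hi, hA]
      by_cases h1 : u = c.getVert i <;> by_cases h2 : u = c.getVert (i+1)
      · exact absurd (h1 ▸ h2) hne
      · simp [hed, Sym2.mem_iff, h1, h2, pow_succ, hne, hne.symm]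
      · simp [hed, Sym2.mem_iff, h1, h2, pow_succ, hne, hne.symm]
      · simp [hed, Sym2.mem_iff, h1, h2]
    rw [Finset.sum_congr rfl hterm, Finset.sum_range_sub' A]
    have hvn : c.getVert c.length = v := c.getVert_length
    have hv0 : c.getVert 0 = v := c.getVert_zero
    rw [hA]
    simp only [hv0, hvn, pow_zero, hev.neg_one_pow]
    ring
  -- the perturbed weighting
  set w' : Sym2 V → ℝ := fun e => w e + x * f e with hw'
  have hw'_not : ∀ e, e ∉ c.edges → w' e = w e := by
    intro e he; simp [hw', hf_not e he]
  have hw'_ed : ∀ i, i < c.length → w' (ed i) = w (ed i) + x * (-1)^i := by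
    intro i h; simp [hw', hf_ed i h]
  have hw'pfm : IsPerfectFractionalMatching H w' := by
    refine ⟨?_, ?_, ?_⟩
    · intro e
      by_cases he : e ∈ c.edges
      · have h1 : c.edges.idxOf e < c.length := hidx_lt e he
        have hee : ed (c.edges.idxOf e) = e := hidx_ed e he
        have hle := hx_le _ h1
        have hp := hpos _ h1
        have hl := hlt1 _ h1
        rw [← hee, hw'_ed _ h1]
        by_cases hpar : Even (c.edges.idxOf e)
        · rw [hδ_even _ hpar] at hle
          rw [hpar.neg_one_pow]
          constructor <;> nlinarith
        · rw [hδ_odd _ hpar] at hle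
          rw [(Nat.not_even_iff_odd.mp hpar).neg_one_pow]
          constructor <;> nlinarith
      · rw [hw'_not e he]; exact hw.1 e
    · intro e he
      have heE : e ∉ c.edges := fun h => he (hEH e h).1
      rw [hw'_not e heE]
      exact hw.2.1 e he
    · intro u
      have hsplit : ∀ e ∈ H.edgeFinset, (if u ∈ e then w' e else 0)
          = (if u ∈ e then w e else 0) + x * (if u ∈ e then f e else 0) := by
        intro e _
        by_cases h : u ∈ e <;> simp [h, hw']
      rw [Finset.sum_congr rfl hsplit, Finset.sum_add_distrib, ← Finset.mul_sum, hfsum u,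
        hw.2.2 u]
      ring
  -- the minimizing edge leaves the strict set
  obtain ⟨i₀, hi₀mem, hi₀⟩ := Finset.exists_mem_eq_inf' hrange δ
  rw [Finset.mem_range] at hi₀mem
  have hxδ : x = δ i₀ := hi₀
  have he₀E : ed i₀ ∈ c.edges := hmemE i₀ hi₀mem
  have he₀S : ed i₀ ∈ {e ∈ H.edgeSet | 0 < w e ∧ w e < 1} :=
    ⟨(hEH _ he₀E).1, hpos _ hi₀mem, hlt1 _ hi₀mem⟩
  have he₀S' : ed i₀ ∉ {e ∈ H.edgeSet | 0 < w' e ∧ w' e < 1} := by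
    intro hmem
    obtain ⟨-, hgt, hlt⟩ := hmem
    rw [hw'_ed _ hi₀mem] at hgt hlt
    by_cases hpar : Even i₀
    · rw [hδ_even _ hpar] at hxδ
      rw [hpar.neg_one_pow] at hlt
      nlinarith
    · rw [hδ_odd _ hpar] at hxδ
      rw [(Nat.not_even_iff_odd.mp hpar).neg_one_pow] at hgt
      nlinarith
  have hsub : {e ∈ H.edgeSet | 0 < w' e ∧ w' e < 1} ⊆ {e ∈ H.edgeSet | 0 < w e ∧ w e < 1} := by
    intro e he
    obtain ⟨heH, hgt, hlt⟩ := he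
    by_cases heE : e ∈ c.edges
    · have h1 : c.edges.idxOf e < c.length := hidx_lt e heE
      have hee : ed (c.edges.idxOf e) = e := hidx_ed e heE
      exact ⟨heH, by rw [← hee]; exact hpos _ h1, by rw [← hee]; exact hlt1 _ h1⟩
    · rw [hw'_not e heE] at hgt hlt
      exact ⟨heH, hgt, hlt⟩
  have hssub : {e ∈ H.edgeSet | 0 < w' e ∧ w' e < 1} ⊂ {e ∈ H.edgeSet | 0 < w e ∧ w e < 1} :=
    ⟨hsub, fun h => he₀S' (h he₀S)⟩
  have hfin : {e ∈ H.edgeSet | 0 < w e ∧ w e < 1}.Finite := Set.toFinite _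
  have hlt' := Set.ncard_lt_ncard hssub hfin
  have hge := hmin w' hw'pfm
  omega
end
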